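/- (Uniqueness of the index of a fold point.) Let m ≥ n ≥ 1 be integers and let i, i′ be integers with 0 ≤ i ≤ (m−n+1)/2 and 0 ≤ i′ ≤ (m−n+1)/2. Suppose there exist open neighborhoods U, U′ of 0 in ℝᵐ and V, V′ of 0 in ℝⁿ, and C^∞ diffeomorphisms Φ : U → U′ and Ψ : V → V′ with Φ(0) = 0 and Ψ(0) = 0, such that g_{m,n,i′}(Φ(x)) = Ψ(g_{m,n,i}(x)) for every x ∈ U (where g_{m,n,i}(U) ⊆ V). Then i = i′. -/

import Mathlib

/-- The fold normal form `g_{m,n,i} : ℝᵐ → ℝⁿ` (0-indexed coordinates): the first `n - 1`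
components are the coordinate functions `x₀, …, x_{n-2}`, and the last component is
`∑_{n-1 ≤ j < m-i} x_j² − ∑_{m-i ≤ j < m} x_j²`. -/
def foldNormalForm (m n i : ℕ) (x : EuclideanSpace ℝ (Fin m)) : EuclideanSpace ℝ (Fin n) :=
  WithLp.toLp 2 fun k =>
    if _hk : (k : ℕ) < n - 1 then (if h : (k : ℕ) < m then x ⟨(k : ℕ), h⟩ else 0)
    else
      ∑ j : Fin m,
        (if (j : ℕ) < n - 1 then 0 else if (j : ℕ) < m - i then x j ^ 2 else -(x j ^ 2))

/-!
Differentiate the conjugacy `g_{i'} ∘ Φ = Ψ ∘ g_i` at `0`. Write `q_i` (`foldQuadratic m n i`)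
for the last component of `g_i` and `W` for the subspace `x₀ = ⋯ = x_{n-2} = 0`. On `W` the map
`g_i` is purely quadratic, so comparing the `t²`-terms of both sides along `t ↦ t • u` gives
`q_{i'} ∘ DΦ(0) = c • q_i` on `W`, where `c` is the last diagonal entry of `DΨ(0)`. Comparing the
`t`-terms along the first `n - 1` axes shows that the last row of `DΨ(0)` is `(0, …, 0, c)`, so
`c ≠ 0` because `DΨ(0)` is invertible.

Now a subspace on which `q_{i'} ∘ DΦ(0)` is negative (positive) definite has dimension at most
`i'` (at most `m - n + 1 - i'`), since it meets the kernel of the corresponding coordinates of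
`DΦ(0)` trivially. Applied to the `i`-dimensional negative and `(m - n + 1 - i)`-dimensional
positive subspaces of `q_i` inside `W`, this gives `i = i'` when `c > 0`, and `i + i' ≥ m - n + 1`
when `c < 0`, which together with `2 i, 2 i' ≤ m - n + 1` again forces `i = i'`.
-/

open Filter Topology Module

section Calculus

variable {𝕜 E F : Type*} [NontriviallyNormedField 𝕜] [NormedAddCommGroup E] [NormedSpace 𝕜 E]
  [NormedAddCommGroup F] [NormedSpace 𝕜 F] {f : E → F} {f' : E →L[𝕜] F}

theorem HasFDerivAt.tendsto_inv_smul_apply_smul (hf : HasFDerivAt f f' 0) (hf0 : f 0 = 0)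
    (u : E) : Tendsto (fun t : 𝕜 => t⁻¹ • f (t • u)) (𝓝[≠] 0) (𝓝 (f' u)) := by
  simpa [hf0] using (hf.hasLineDerivAt u).tendsto_slope_zero

end Calculus

theorem tendsto_sq_nhdsNE_zero : Tendsto (fun t : ℝ => t ^ 2) (𝓝[≠] 0) (𝓝[≠] 0) :=
  tendsto_nhdsWithin_of_tendsto_nhds_of_eventually_within _
    ((continuous_pow 2).tendsto' 0 0 (by simp) |>.mono_left nhdsWithin_le_nhds)
    (eventually_nhdsWithin_of_forall fun t ht => pow_ne_zero 2 ht)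

section RealCalculus

variable {E F : Type*} [NormedAddCommGroup E] [NormedSpace ℝ E]
  [NormedAddCommGroup F] [NormedSpace ℝ F]

theorem HasFDerivAt.tendsto_inv_sq_mul_apply_smul {f : E → F} {f' : E →L[ℝ] F} {Q : F → ℝ}
    (hf : HasFDerivAt f f' 0) (hf0 : f 0 = 0)
    (hQ : Continuous Q) (hQsmul : ∀ (t : ℝ) y, Q (t • y) = t ^ 2 * Q y) (u : E) :
    Tendsto (fun t : ℝ => (t ^ 2)⁻¹ * Q (f (t • u))) (𝓝[≠] 0) (𝓝 (Q (f' u))) := by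
  refine ((hQ.tendsto _).comp (hf.tendsto_inv_smul_apply_smul hf0 u)).congr fun t => ?_
  simp [hQsmul, inv_pow]

theorem Filter.Eventually.smul_nhdsNE_zero {p : E → Prop} (hp : ∀ᶠ x in 𝓝 0, p x) (u : E) :
    ∀ᶠ t : ℝ in 𝓝[≠] 0, p (t • u) :=
  ((continuous_id.smul continuous_const).tendsto' (0 : ℝ) (0 : E) (zero_smul ℝ u)
    |>.mono_left nhdsWithin_le_nhds).eventually hp

theorem HasFDerivAt.surjective_of_eventually_leftInverse [FiniteDimensional ℝ E] {f g : E → E}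
    {f' g' : E →L[ℝ] E} {x : E}
    (hf : HasFDerivAt f f' x) (hg : HasFDerivAt g g' (f x)) (hgf : ∀ᶠ y in 𝓝 x, g (f y) = y) :
    Function.Surjective f' := by
  have hcomp : g'.comp f' = ContinuousLinearMap.id ℝ E :=
    (hg.comp x hf).unique ((hasFDerivAt_id x).congr_of_eventuallyEq hgf)
  have hinj : Function.Injective f' :=
    Function.LeftInverse.injective (g := g') fun y => by simpa using congrArg (· y) hcomp
  exact LinearMap.injective_iff_surjective (f := f'.toLinearMap) |>.mp hinj

end RealCalculus

theorem finrank_le_of_neg_of_nonneg_on_ker {R G E F : Type*} [Ring R] [StrongRankCondition R]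
    [AddCommGroup G] [Module R G] [AddCommGroup E] [Module R E] [AddCommGroup F] [Module R F]
    [Module.Finite R F] (Q : E → ℝ) (ι : G →ₗ[R] E) (L : E →ₗ[R] F)
    (hι : ∀ w, w ≠ 0 → Q (ι w) < 0) (hL : ∀ x, L x = 0 → 0 ≤ Q x) :
    finrank R G ≤ finrank R F := by
  refine LinearMap.finrank_le_finrank_of_injective (f := L ∘ₗ ι) ?_
  rw [← LinearMap.ker_eq_bot, LinearMap.ker_eq_bot']
  intro w hw
  by_contra hw0
  exact (hι w hw0).not_ge (hL _ hw)

theorem ContinuousLinearMap.apply_single_ne_zero_of_surjective {n : Type*} [Fintype n]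
    [DecidableEq n] (D : EuclideanSpace ℝ n →L[ℝ] EuclideanSpace ℝ n) (hD : Function.Surjective D)
    (k : n) (hk : ∀ j ≠ k, D (EuclideanSpace.single j 1) k = 0) :
    D (EuclideanSpace.single k 1) k ≠ 0 := by
  obtain ⟨y, hy⟩ := hD (EuclideanSpace.single k 1)
  have hexp : D y k = y k * D (EuclideanSpace.single k 1) k := by
    conv_lhs => rw [← (EuclideanSpace.basisFun n ℝ).sum_repr y]
    rw [map_sum, WithLp.ofLp_sum, Finset.sum_apply, Finset.sum_eq_single k]
    · simp
    · intro j _ hj; simp [hk j hj]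
    · simp
  intro h0
  simp [hy, h0] at hexp

section ExtendByZero

variable {ι κ : Type*}

noncomputable def extendByZeroLp (e : ι → κ) : (ι → ℝ) →ₗ[ℝ] EuclideanSpace ℝ κ :=
  (WithLp.linearEquiv 2 ℝ (κ → ℝ)).symm.toLinearMap ∘ₗ Function.ExtendByZero.linearMap ℝ e

theorem extendByZeroLp_apply_apply {e : ι → κ} (he : e.Injective) (w : ι → ℝ) (j : ι) :
    extendByZeroLp e w (e j) = w j := by
  simp [extendByZeroLp, he.extend_apply]

theorem extendByZeroLp_apply_of_notMem_range {e : ι → κ} (w : ι → ℝ) {k : κ}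
    (hk : k ∉ Set.range e) : extendByZeroLp e w k = 0 := by
  simp [extendByZeroLp, Function.extend_apply' _ _ _ (by simpa using hk)]

theorem extendByZeroLp_ne_zero {e : ι → κ} (he : e.Injective) {w : ι → ℝ} (hw : w ≠ 0) :
    extendByZeroLp e w ≠ 0 := by
  obtain ⟨j, hj⟩ := Function.ne_iff.mp hw
  intro h
  exact hj (by simpa [h] using (extendByZeroLp_apply_apply he w j).symm)

end ExtendByZero

section Blocks

variable {m a len : ℕ}

theorem Fin.exists_castLE_natAdd_eq (h : a + len ≤ m) {k : Fin m} (hak : a ≤ k)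
    (hk : (k : ℕ) < a + len) : ∃ j : Fin len, Fin.castLE h (Fin.natAdd a j) = k :=
  ⟨⟨k - a, by omega⟩, by ext; simp; omega⟩

theorem extendByZeroLp_castLE_natAdd_apply_eq_zero (h : a + len ≤ m) (w : Fin len → ℝ)
    {k : Fin m} (hk : (k : ℕ) < a ∨ a + len ≤ k) :
    extendByZeroLp (Fin.castLE h ∘ Fin.natAdd a) w k = 0 :=
  extendByZeroLp_apply_of_notMem_range w fun ⟨j, hj⟩ => by
    simp only [Function.comp_apply, Fin.ext_iff, Fin.val_castLE, Fin.val_natAdd] at hj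
    omega

theorem extendByZeroLp_castLE_natAdd_ne_zero (h : a + len ≤ m) {w : Fin len → ℝ}
    (hw : w ≠ 0) : extendByZeroLp (Fin.castLE h ∘ Fin.natAdd a) w ≠ 0 :=
  extendByZeroLp_ne_zero ((Fin.castLE_injective h).comp (Fin.natAdd_injective _ _)) hw

end Blocks

section FoldQuadratic

variable {m n i : ℕ}

def foldQuadratic (m n i : ℕ) (x : EuclideanSpace ℝ (Fin m)) : ℝ :=
  ∑ j : Fin m, (if (j : ℕ) < n - 1 then 0 else if (j : ℕ) < m - i then x j ^ 2 else -(x j ^ 2))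

theorem continuous_foldQuadratic (m n i : ℕ) : Continuous (foldQuadratic m n i) := by
  refine continuous_finsetSum _ fun j _ => ?_
  split_ifs <;> fun_prop

theorem foldQuadratic_smul (t : ℝ) (x : EuclideanSpace ℝ (Fin m)) :
    foldQuadratic m n i (t • x) = t ^ 2 * foldQuadratic m n i x := by
  simp only [foldQuadratic, Finset.mul_sum, PiLp.smul_apply, smul_eq_mul]
  refine Finset.sum_congr rfl fun j _ => ?_
  split_ifs <;> ring

theorem foldQuadratic_nonneg {x : EuclideanSpace ℝ (Fin m)}
    (hx : ∀ j : Fin m, m - i ≤ j → x j = 0) : 0 ≤ foldQuadratic m n i x := by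
  refine Finset.sum_nonneg fun j _ => ?_
  split_ifs with h1 h2
  · rfl
  · positivity
  · simp [hx j (by omega)]

theorem foldQuadratic_nonpos {x : EuclideanSpace ℝ (Fin m)}
    (hx : ∀ j : Fin m, n - 1 ≤ j → (j : ℕ) < m - i → x j = 0) : foldQuadratic m n i x ≤ 0 := by
  refine Finset.sum_nonpos fun j _ => ?_
  split_ifs with h1 h2
  · rfl
  · simp [hx j (by omega) h2]
  · simpa using sq_nonneg (x j)

theorem foldQuadratic_eq_zero {x : EuclideanSpace ℝ (Fin m)}
    (hx : ∀ j : Fin m, n - 1 ≤ j → x j = 0) : foldQuadratic m n i x = 0 :=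
  Finset.sum_eq_zero fun j _ => by
    split_ifs with h1
    · rfl
    all_goals simp [hx j (by omega)]

theorem foldQuadratic_eq_norm_sq {x : EuclideanSpace ℝ (Fin m)}
    (hx : ∀ j : Fin m, ((j : ℕ) < n - 1 ∨ m - i ≤ j) → x j = 0) :
    foldQuadratic m n i x = ‖x‖ ^ 2 := by
  rw [EuclideanSpace.real_norm_sq_eq]
  refine Finset.sum_congr rfl fun j _ => ?_
  split_ifs with h1 h2
  · simp [hx j (.inl h1)]
  · rfl
  · simp [hx j (.inr (by omega))]

theorem foldQuadratic_eq_neg_norm_sq (hin : n - 1 ≤ m - i) {x : EuclideanSpace ℝ (Fin m)}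
    (hx : ∀ j : Fin m, (j : ℕ) < m - i → x j = 0) :
    foldQuadratic m n i x = -‖x‖ ^ 2 := by
  rw [EuclideanSpace.real_norm_sq_eq, ← Finset.sum_neg_distrib]
  refine Finset.sum_congr rfl fun j _ => ?_
  split_ifs with h1 h2
  · simp [hx j (by omega)]
  · simp [hx j h2]
  · rfl

theorem foldNormalForm_apply_of_lt (hnm : n ≤ m) (x : EuclideanSpace ℝ (Fin m)) {k : Fin n}
    (hk : (k : ℕ) < n - 1) : foldNormalForm m n i x k = x ⟨k, by omega⟩ := by
  simp [foldNormalForm, hk, show (k : ℕ) < m by omega]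

theorem foldNormalForm_apply_of_le (x : EuclideanSpace ℝ (Fin m)) {k : Fin n}
    (hk : n - 1 ≤ k) : foldNormalForm m n i x k = foldQuadratic m n i x := by
  simp [foldNormalForm, foldQuadratic, show ¬ (k : ℕ) < n - 1 by omega]

theorem foldNormalForm_eq_single (hnm : n ≤ m) {k : Fin n} (hk : n - 1 ≤ k)
    {x : EuclideanSpace ℝ (Fin m)} (hx : ∀ j : Fin m, (j : ℕ) < n - 1 → x j = 0) :
    foldNormalForm m n i x = EuclideanSpace.single k (foldQuadratic m n i x) := by
  ext l
  by_cases hl : (l : ℕ) < n - 1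
  · rw [foldNormalForm_apply_of_lt hnm x hl, hx _ hl]
    simp [PiLp.single_apply, Fin.ext_iff]
    omega
  · rw [foldNormalForm_apply_of_le x (by omega), show l = k by omega]
    simp

theorem foldNormalForm_smul_single (hnm : n ≤ m) {j : Fin n} (hj : (j : ℕ) < n - 1) (t : ℝ) :
    foldNormalForm m n i (t • EuclideanSpace.single ⟨j, by omega⟩ 1) =
      t • EuclideanSpace.single j 1 := by
  ext l
  by_cases hl : (l : ℕ) < n - 1
  · rw [foldNormalForm_apply_of_lt hnm _ hl]
    simp [PiLp.single_apply, Fin.ext_iff]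
  · rw [foldNormalForm_apply_of_le _ (by omega), foldQuadratic_eq_zero]
    · simp [PiLp.single_apply, Fin.ext_iff]
      omega
    · intro k hk
      simp [PiLp.single_apply, Fin.ext_iff]
      omega

theorem exists_foldQuadratic_neg_definite (hin : n - 1 ≤ m - i) (hi : i ≤ m) :
    ∃ ι : (Fin i → ℝ) →ₗ[ℝ] EuclideanSpace ℝ (Fin m),
      (∀ w, ∀ j : Fin m, (j : ℕ) < n - 1 → ι w j = 0) ∧
      ∀ w, w ≠ 0 → foldQuadratic m n i (ι w) < 0 := by
  have h : m - i + i ≤ m := by omega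
  refine ⟨extendByZeroLp (Fin.castLE h ∘ Fin.natAdd (m - i)),
    fun w j hj => extendByZeroLp_castLE_natAdd_apply_eq_zero h w (.inl (by omega)), fun w hw => ?_⟩
  rw [foldQuadratic_eq_neg_norm_sq hin fun j hj =>
    extendByZeroLp_castLE_natAdd_apply_eq_zero h w (.inl hj)]
  have := norm_pos_iff.mpr (extendByZeroLp_castLE_natAdd_ne_zero h hw)
  nlinarith

theorem exists_foldQuadratic_pos_definite (hin : n - 1 ≤ m - i) :
    ∃ ι : (Fin (m - i - (n - 1)) → ℝ) →ₗ[ℝ] EuclideanSpace ℝ (Fin m),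
      (∀ w, ∀ j : Fin m, (j : ℕ) < n - 1 → ι w j = 0) ∧
      ∀ w, w ≠ 0 → 0 < foldQuadratic m n i (ι w) := by
  have h : n - 1 + (m - i - (n - 1)) ≤ m := by omega
  refine ⟨extendByZeroLp (Fin.castLE h ∘ Fin.natAdd (n - 1)),
    fun w j hj => extendByZeroLp_castLE_natAdd_apply_eq_zero h w (.inl hj), fun w hw => ?_⟩
  rw [foldQuadratic_eq_norm_sq fun j hj =>
    extendByZeroLp_castLE_natAdd_apply_eq_zero h w (hj.imp_right fun hj => by omega)]
  exact pow_pos (norm_pos_iff.mpr (extendByZeroLp_castLE_natAdd_ne_zero h hw)) 2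

section Definite

variable {G : Type*} [AddCommGroup G] [Module ℝ G]
  (A : EuclideanSpace ℝ (Fin m) →ₗ[ℝ] EuclideanSpace ℝ (Fin m))
  (ι : G →ₗ[ℝ] EuclideanSpace ℝ (Fin m))

theorem finrank_le_of_foldQuadratic_comp_neg (hi : i ≤ m)
    (h : ∀ w, w ≠ 0 → foldQuadratic m n i (A (ι w)) < 0) : finrank ℝ G ≤ i := by
  have hblock : m - i + i ≤ m := by omega
  let L := LinearMap.funLeft ℝ ℝ (Fin.castLE hblock ∘ Fin.natAdd (m - i)) ∘ₗ
    (WithLp.linearEquiv 2 ℝ (Fin m → ℝ)).toLinearMap ∘ₗ A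
  simpa using finrank_le_of_neg_of_nonneg_on_ker (fun x => foldQuadratic m n i (A x)) ι L h
    fun x hx => foldQuadratic_nonneg fun k hk => by
      obtain ⟨j, rfl⟩ := Fin.exists_castLE_natAdd_eq hblock hk (by omega)
      exact congrFun hx j

theorem finrank_le_of_foldQuadratic_comp_pos (hin : n - 1 ≤ m - i)
    (h : ∀ w, w ≠ 0 → 0 < foldQuadratic m n i (A (ι w))) :
    finrank ℝ G ≤ m - i - (n - 1) := by
  have hblock : n - 1 + (m - i - (n - 1)) ≤ m := by omega
  let L := LinearMap.funLeft ℝ ℝ (Fin.castLE hblock ∘ Fin.natAdd (n - 1)) ∘ₗ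
    (WithLp.linearEquiv 2 ℝ (Fin m → ℝ)).toLinearMap ∘ₗ A
  simpa using finrank_le_of_neg_of_nonneg_on_ker (fun x => -foldQuadratic m n i (A x)) ι L
    (fun w hw => neg_neg_of_pos (h w hw))
    fun x hx => neg_nonneg.mpr <| foldQuadratic_nonpos fun k hk hk' => by
      obtain ⟨j, rfl⟩ := Fin.exists_castLE_natAdd_eq hblock hk (by omega)
      exact congrFun hx j

end Definite

theorem eq_of_foldQuadratic_comp_eq_mul {i' : ℕ} (hn : 1 ≤ n) (hnm : n ≤ m)
    (hi : 2 * i ≤ m - n + 1) (hi' : 2 * i' ≤ m - n + 1)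
    (A : EuclideanSpace ℝ (Fin m) →ₗ[ℝ] EuclideanSpace ℝ (Fin m))
    {c : ℝ} (hc : c ≠ 0) (hA : ∀ u : EuclideanSpace ℝ (Fin m),
      (∀ j : Fin m, (j : ℕ) < n - 1 → u j = 0) →
        foldQuadratic m n i' (A u) = c * foldQuadratic m n i u) :
    i = i' := by
  obtain ⟨ιneg, hιneg, hneg⟩ := exists_foldQuadratic_neg_definite (m := m) (n := n) (i := i)
    (by omega) (by omega)
  obtain ⟨ιpos, hιpos, hpos⟩ := exists_foldQuadratic_pos_definite (m := m) (n := n) (i := i)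
    (by omega)
  have hnegA w : foldQuadratic m n i' (A (ιneg w)) = c * foldQuadratic m n i (ιneg w) :=
    hA _ (hιneg w)
  have hposA w : foldQuadratic m n i' (A (ιpos w)) = c * foldQuadratic m n i (ιpos w) :=
    hA _ (hιpos w)
  rcases hc.lt_or_gt with hc | hc
  · have h := finrank_le_of_foldQuadratic_comp_neg (n := n) A ιpos (by omega) fun w hw =>
      hposA w ▸ mul_neg_of_neg_of_pos hc (hpos w hw)
    simp only [finrank_fin_fun] at h
    omega
  · have h₁ := finrank_le_of_foldQuadratic_comp_neg (n := n) A ιneg (by omega) fun w hw =>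
      hnegA w ▸ mul_neg_of_pos_of_neg hc (hneg w hw)
    have h₂ := finrank_le_of_foldQuadratic_comp_pos A ιpos (by omega) fun w hw =>
      hposA w ▸ mul_pos hc (hpos w hw)
    simp only [finrank_fin_fun] at h₁ h₂
    omega

end FoldQuadratic

section Conjugacy

variable {m n i i' : ℕ} {Φ : EuclideanSpace ℝ (Fin m) → EuclideanSpace ℝ (Fin m)}
  {Ψ : EuclideanSpace ℝ (Fin n) → EuclideanSpace ℝ (Fin n)}
  {A : EuclideanSpace ℝ (Fin m) →L[ℝ] EuclideanSpace ℝ (Fin m)}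
  {D : EuclideanSpace ℝ (Fin n) →L[ℝ] EuclideanSpace ℝ (Fin n)}

theorem foldQuadratic_fderiv_eq_mul (hnm : n ≤ m) (hΦ : HasFDerivAt Φ A 0) (hΦ0 : Φ 0 = 0)
    (hΨ : HasFDerivAt Ψ D 0) (hΨ0 : Ψ 0 = 0)
    (hconj : ∀ᶠ x in 𝓝 0, foldNormalForm m n i' (Φ x) = Ψ (foldNormalForm m n i x))
    {k : Fin n} (hk : n - 1 ≤ k) {u : EuclideanSpace ℝ (Fin m)}
    (hu : ∀ j : Fin m, (j : ℕ) < n - 1 → u j = 0) :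
    foldQuadratic m n i' (A u) = D (EuclideanSpace.single k 1) k * foldQuadratic m n i u := by
  set v := foldQuadratic m n i u • EuclideanSpace.single k (1 : ℝ)
  have hlimΦ := hΦ.tendsto_inv_sq_mul_apply_smul hΦ0 (continuous_foldQuadratic m n i')
    foldQuadratic_smul u
  have hlimΨ : Tendsto (fun t : ℝ => (t ^ 2)⁻¹ * Ψ (t ^ 2 • v) k) (𝓝[≠] 0) (𝓝 (D v k)) :=
    ((PiLp.continuous_apply 2 _ k).tendsto _).comp
      ((hΨ.tendsto_inv_smul_apply_smul hΨ0 v).comp tendsto_sq_nhdsNE_zero)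
  have heq : ∀ᶠ t : ℝ in 𝓝[≠] 0,
      (t ^ 2)⁻¹ * foldQuadratic m n i' (Φ (t • u)) = (t ^ 2)⁻¹ * Ψ (t ^ 2 • v) k := by
    filter_upwards [hconj.smul_nhdsNE_zero u] with t ht
    have hsingle : foldNormalForm m n i (t • u) = t ^ 2 • v := by
      rw [foldNormalForm_eq_single hnm hk fun j hj => by simp [hu j hj], foldQuadratic_smul]
      ext l
      simp [v, PiLp.single_apply]
    rw [← foldNormalForm_apply_of_le _ hk, ht, hsingle]
  rw [tendsto_nhds_unique (hlimΦ.congr' heq) hlimΨ]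
  simp [v, mul_comm]

theorem fderiv_single_apply_eq_zero (hnm : n ≤ m) (hΦ : HasFDerivAt Φ A 0) (hΦ0 : Φ 0 = 0)
    (hΨ : HasFDerivAt Ψ D 0) (hΨ0 : Ψ 0 = 0)
    (hconj : ∀ᶠ x in 𝓝 0, foldNormalForm m n i' (Φ x) = Ψ (foldNormalForm m n i x))
    {k : Fin n} (hk : n - 1 ≤ k) {j : Fin n} (hj : (j : ℕ) < n - 1) :
    D (EuclideanSpace.single j 1) k = 0 := by
  set u : EuclideanSpace ℝ (Fin m) := EuclideanSpace.single ⟨j, by omega⟩ 1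
  have hlimΦ : Tendsto (fun t : ℝ => t * ((t ^ 2)⁻¹ * foldQuadratic m n i' (Φ (t • u))))
      (𝓝[≠] 0) (𝓝 (0 * foldQuadratic m n i' (A u))) :=
    (tendsto_id.mono_left nhdsWithin_le_nhds).mul
      (hΦ.tendsto_inv_sq_mul_apply_smul hΦ0 (continuous_foldQuadratic m n i')
        foldQuadratic_smul u)
  have hlimΨ : Tendsto (fun t : ℝ => t⁻¹ * Ψ (t • EuclideanSpace.single j 1) k) (𝓝[≠] 0)
      (𝓝 (D (EuclideanSpace.single j 1) k)) :=
    ((PiLp.continuous_apply 2 _ k).tendsto _).comp (hΨ.tendsto_inv_smul_apply_smul hΨ0 _)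
  have heq : ∀ᶠ t : ℝ in 𝓝[≠] 0, t * ((t ^ 2)⁻¹ * foldQuadratic m n i' (Φ (t • u))) =
      t⁻¹ * Ψ (t • EuclideanSpace.single j 1) k := by
    filter_upwards [hconj.smul_nhdsNE_zero u, self_mem_nhdsWithin] with t ht ht0
    rw [← foldNormalForm_apply_of_le _ hk, ht, foldNormalForm_smul_single hnm hj]
    field_simp [show t ≠ 0 from ht0]
  simpa using tendsto_nhds_unique hlimΨ (hlimΦ.congr' heq)

end Conjugacy

theorem foldNormalForm_index_unique_general (m n i i' : ℕ) (h1 : 1 ≤ n) (hnm : n ≤ m)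
    (hi : 2 * i ≤ m - n + 1) (hi' : 2 * i' ≤ m - n + 1)
    (U : Set (EuclideanSpace ℝ (Fin m))) (V V' : Set (EuclideanSpace ℝ (Fin n)))
    (hUopen : IsOpen U) (hVopen : IsOpen V) (hV'open : IsOpen V')
    (h0U : 0 ∈ U) (h0V : 0 ∈ V)
    (Φ : EuclideanSpace ℝ (Fin m) → EuclideanSpace ℝ (Fin m))
    (Ψ : EuclideanSpace ℝ (Fin n) → EuclideanSpace ℝ (Fin n))
    (Ψinv : EuclideanSpace ℝ (Fin n) → EuclideanSpace ℝ (Fin n))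
    (hΦ0 : Φ 0 = 0) (hΨ0 : Ψ 0 = 0)
    (hΨim : Ψ '' V = V')
    (hΦsm : ContDiffOn ℝ (⊤ : ℕ∞) Φ U)
    (hΨsm : ContDiffOn ℝ (⊤ : ℕ∞) Ψ V) (hΨinvsm : ContDiffOn ℝ (⊤ : ℕ∞) Ψinv V')
    (hΨleft : ∀ x ∈ V, Ψinv (Ψ x) = x)
    (hconj : ∀ x ∈ U, foldNormalForm m n i' (Φ x) = Ψ (foldNormalForm m n i x)) :
    i = i' := by
  have hΦ : HasFDerivAt Φ (fderiv ℝ Φ 0) 0 :=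
    ((hΦsm.differentiableOn (by simp)).differentiableAt (hUopen.mem_nhds h0U)).hasFDerivAt
  have hΨ : HasFDerivAt Ψ (fderiv ℝ Ψ 0) 0 :=
    ((hΨsm.differentiableOn (by simp)).differentiableAt (hVopen.mem_nhds h0V)).hasFDerivAt
  have hΨinv : HasFDerivAt Ψinv (fderiv ℝ Ψinv (Ψ 0)) (Ψ 0) :=
    ((hΨinvsm.differentiableOn (by simp)).differentiableAt
      (hV'open.mem_nhds (hΨim ▸ Set.mem_image_of_mem Ψ h0V))).hasFDerivAt
  have hconj₀ := eventually_of_mem (hUopen.mem_nhds h0U) hconj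
  let k : Fin n := ⟨n - 1, by omega⟩
  have hk : n - 1 ≤ k := le_rfl
  have hD : Function.Surjective (fderiv ℝ Ψ 0) :=
    hΨ.surjective_of_eventually_leftInverse hΨinv
      (eventually_of_mem (hVopen.mem_nhds h0V) hΨleft)
  have hc : fderiv ℝ Ψ 0 (EuclideanSpace.single k 1) k ≠ 0 :=
    (fderiv ℝ Ψ 0).apply_single_ne_zero_of_surjective hD k fun j hj =>
      fderiv_single_apply_eq_zero hnm hΦ hΦ0 hΨ hΨ0 hconj₀ hk
        ((Fin.val_ne_of_ne hj).lt_of_le (by omega))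
  exact eq_of_foldQuadratic_comp_eq_mul h1 hnm hi hi' (fderiv ℝ Φ 0) hc fun u hu =>
    foldQuadratic_fderiv_eq_mul hnm hΦ hΦ0 hΨ hΨ0 hconj₀ hk hu

/-- Uniqueness of the index of a fold point.  Let `m ≥ n ≥ 1` and let `i, i'` be integers
with `0 ≤ i, i' ≤ (m - n + 1)/2`.  If there are open neighborhoods `U, U'` of `0` in `ℝᵐ`
and `V, V'` of `0` in `ℝⁿ` and `C^∞` diffeomorphisms `Φ : U → U'` and `Ψ : V → V'` fixing
`0`, with `g_{m,n,i}(U) ⊆ V` and `g_{m,n,i'} ∘ Φ = Ψ ∘ g_{m,n,i}` on `U`, then `i = i'`. -/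
theorem foldNormalForm_index_unique (m n i i' : ℕ) (h1 : 1 ≤ n) (hnm : n ≤ m)
    (hi : 2 * i ≤ m - n + 1) (hi' : 2 * i' ≤ m - n + 1)
    (U U' : Set (EuclideanSpace ℝ (Fin m))) (V V' : Set (EuclideanSpace ℝ (Fin n)))
    (hUopen : IsOpen U) (hU'open : IsOpen U') (hVopen : IsOpen V) (hV'open : IsOpen V')
    (h0U : 0 ∈ U) (h0V : 0 ∈ V)
    (Φ : EuclideanSpace ℝ (Fin m) → EuclideanSpace ℝ (Fin m))
    (Φinv : EuclideanSpace ℝ (Fin m) → EuclideanSpace ℝ (Fin m))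
    (Ψ : EuclideanSpace ℝ (Fin n) → EuclideanSpace ℝ (Fin n))
    (Ψinv : EuclideanSpace ℝ (Fin n) → EuclideanSpace ℝ (Fin n))
    (hΦ0 : Φ 0 = 0) (hΨ0 : Ψ 0 = 0)
    (hΦim : Φ '' U = U') (hΨim : Ψ '' V = V')
    (hΦsm : ContDiffOn ℝ (⊤ : ℕ∞) Φ U) (hΦinvsm : ContDiffOn ℝ (⊤ : ℕ∞) Φinv U')
    (hΨsm : ContDiffOn ℝ (⊤ : ℕ∞) Ψ V) (hΨinvsm : ContDiffOn ℝ (⊤ : ℕ∞) Ψinv V')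
    (hΦleft : ∀ x ∈ U, Φinv (Φ x) = x) (hΦright : ∀ y ∈ U', Φ (Φinv y) = y)
    (hΨleft : ∀ x ∈ V, Ψinv (Ψ x) = x) (hΨright : ∀ y ∈ V', Ψ (Ψinv y) = y)
    (hmaps : ∀ x ∈ U, foldNormalForm m n i x ∈ V)
    (hconj : ∀ x ∈ U, foldNormalForm m n i' (Φ x) = Ψ (foldNormalForm m n i x)) :
    i = i' :=
  foldNormalForm_index_unique_general m n i i' h1 hnm hi hi' U V V' hUopen hVopen hV'open h0U h0V Φ
    Ψ Ψinv hΦ0 hΨ0 hΨim hΦsm hΨsm hΨinvsm hΨleft hconj
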